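/- arXiv:2412.07306 — 3 statements merged into one kernel-verified Lean document; each statement's English description precedes it below -/
import Mathlib

section
/- Under replication, the kriging predictor on the full data equals the kriging predictor on the averaged data: for n unique designs with a_i replicates each (N = Σ a_i total observations), let C_N be the N×N kernel matrix (constant across replicates at the same design), Λ_N the corresponding diagonal noise matrix with entries r(x̄_i)/σ² repeated a_i times, and y the full observation vector. Then c_N(x)ᵀ(C_N + Λ_N)⁻¹ y = c_n(x)ᵀ(C_n + Λ_n A_n⁻¹)⁻¹ ȳ, where C_n is the n×n unique-design kernel matrix, A_n = Diag(a_1,...,a_n), Λ_n = σ^{-2}Diag(r(x̄_1),...,r(x̄_n)), ȳ the vector of replicate means, and c_N(x), c_n(x) the covariance vectors (c_N having each c_n entry repeated a_i times). -/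
open Matrix Finset

/-- Under replication, the kriging predictive mean computed from the full data
equals the one computed from the averaged data with effective noise Λₙ Aₙ⁻¹.
The index set Fin N is partitioned into n blocks via `blk`; the full kernel
matrix is block-constant, built from the unique-design kernel matrix Cₙ. -/
theorem kriging_mean_replication_equivalence {N n : ℕ}
    (blk : Fin N → Fin n) (hsurj : Function.Surjective blk)
    (Cn : Matrix (Fin n) (Fin n) ℝ) (r : Fin n → ℝ) (σ2 : ℝ)
    (hr : ∀ i, 0 < r i) (hσ : 0 < σ2)
    (cn : Fin n → ℝ) (y : Fin N → ℝ)
    -- full-data quantities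
    (CN : Matrix (Fin N) (Fin N) ℝ) (hCN : ∀ j k, CN j k = Cn (blk j) (blk k))
    (ΛN : Matrix (Fin N) (Fin N) ℝ)
    (hΛN : ΛN = Matrix.diagonal fun j => r (blk j) / σ2)
    (cN : Fin N → ℝ) (hcN : ∀ j, cN j = cn (blk j))
    -- reduced-data quantities
    (a : Fin n → ℕ) (ha : ∀ i, a i = (Finset.univ.filter fun j => blk j = i).card)
    (ybar : Fin n → ℝ)
    (hybar : ∀ i, ybar i =
      (∑ j ∈ Finset.univ.filter fun j => blk j = i, y j) / (a i : ℝ))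
    (An Λn : Matrix (Fin n) (Fin n) ℝ)
    (hAn : An = Matrix.diagonal fun i => (a i : ℝ))
    (hΛn : Λn = Matrix.diagonal fun i => r i / σ2)
    (hinv : IsUnit (CN + ΛN).det) (hinv' : IsUnit (Cn + Λn * An⁻¹).det) :
    cN ⬝ᵥ (CN + ΛN)⁻¹ *ᵥ y = cn ⬝ᵥ (Cn + Λn * An⁻¹)⁻¹ *ᵥ ybar := by
  have hr0 : ∀ i, r i ≠ 0 := fun i => (hr i).ne'
  have hσ0 : σ2 ≠ 0 := hσ.ne'
  set u : Fin n → ℝ := (Cn + Λn * An⁻¹)⁻¹ *ᵥ ybar with hu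
  have hMn : (Cn + Λn * An⁻¹) *ᵥ u = ybar := by
    rw [hu, Matrix.mulVec_mulVec, Matrix.mul_nonsing_inv _ hinv', Matrix.one_mulVec]
  have hapos : ∀ i, 0 < (a i : ℝ) := by
    intro i
    have : 0 < (Finset.univ.filter fun j => blk j = i).card := by
      obtain ⟨j, hj⟩ := hsurj i
      exact Finset.card_pos.mpr ⟨j, by simp [hj]⟩
    rw [ha]; exact_mod_cast this
  have ha0 : ∀ i, (a i : ℝ) ≠ 0 := fun i => (hapos i).ne'
  -- the Λn * An⁻¹ diagonal entries
  have hAninv : An⁻¹ = Matrix.diagonal fun i => ((a i : ℝ))⁻¹ := by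
    apply Matrix.inv_eq_right_inv
    rw [hAn, Matrix.diagonal_mul_diagonal, ← Matrix.diagonal_one]
    have : (fun i => (a i : ℝ) * ((a i : ℝ))⁻¹) = fun _ => (1 : ℝ) :=
      funext fun i => mul_inv_cancel₀ (ha0 i)
    rw [this]
  have hdiag : Λn * An⁻¹ = Matrix.diagonal fun i => r i / σ2 * (a i : ℝ)⁻¹ := by
    rw [hΛn, hAninv, Matrix.diagonal_mul_diagonal]
  -- the candidate solution on the full data
  set x : Fin N → ℝ := fun j => σ2 / r (blk j) * (y j - (Cn *ᵥ u) (blk j)) with hx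
  -- block sums of x recover u
  have hs : ∀ i, ∑ j ∈ Finset.univ.filter (fun j => blk j = i), x j = u i := by
    intro i
    have hMni := congrFun hMn i
    rw [Matrix.add_mulVec, hdiag] at hMni
    simp only [Pi.add_apply, Matrix.mulVec_diagonal] at hMni
    have hsumy : ∑ j ∈ Finset.univ.filter (fun j => blk j = i), y j
        = (a i : ℝ) * ybar i := by
      rw [hybar i, mul_div_assoc', mul_comm, mul_div_assoc, div_self (ha0 i), mul_one]
    have hstep : ∑ j ∈ Finset.univ.filter (fun j => blk j = i), x j
        = σ2 / r i * (∑ j ∈ Finset.univ.filter (fun j => blk j = i), y j)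
          - (a i : ℝ) * (σ2 / r i * (Cn *ᵥ u) i) := by
      have h1 : ∑ j ∈ Finset.univ.filter (fun j => blk j = i), x j
          = ∑ j ∈ Finset.univ.filter (fun j => blk j = i),
              (σ2 / r i * y j - σ2 / r i * (Cn *ᵥ u) i) := by
        apply Finset.sum_congr rfl
        intro j hj
        have hbj : blk j = i := (Finset.mem_filter.mp hj).2
        simp only [hx, hbj]
        ring
      rw [h1, Finset.sum_sub_distrib, ← Finset.mul_sum, Finset.sum_const, nsmul_eq_mul,
        ← ha i]
    rw [hstep, hsumy, ← hMni]
    field_simp [hr0 i, hσ0, ha0 i]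
    ring
  -- x solves the full system
  have hMx : (CN + ΛN) *ᵥ x = y := by
    funext j
    rw [Matrix.add_mulVec, hΛN]
    simp only [Pi.add_apply, Matrix.mulVec_diagonal]
    have h1 : (CN *ᵥ x) j = (Cn *ᵥ u) (blk j) := by
      have : (CN *ᵥ x) j = ∑ k, Cn (blk j) (blk k) * x k := by
        simp only [Matrix.mulVec, dotProduct]
        exact Finset.sum_congr rfl fun k _ => by rw [hCN]
      rw [this, Matrix.mulVec]
      rw [← Finset.sum_fiberwise Finset.univ blk (fun k => Cn (blk j) (blk k) * x k)]
      apply Finset.sum_congr rfl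
      intro i _
      have : ∑ k ∈ Finset.univ.filter (fun k => blk k = i), Cn (blk j) (blk k) * x k
          = Cn (blk j) i * ∑ k ∈ Finset.univ.filter (fun k => blk k = i), x k := by
        rw [Finset.mul_sum]
        apply Finset.sum_congr rfl
        intro k hk
        rw [(Finset.mem_filter.mp hk).2]
      rw [this, hs i]
    rw [h1]
    simp only [Pi.add_apply, hx]
    field_simp [hr0 (blk j), hσ0]
    ring
  have hxy : (CN + ΛN)⁻¹ *ᵥ y = x := by
    rw [← hMx, Matrix.mulVec_mulVec, Matrix.nonsing_inv_mul _ hinv, Matrix.one_mulVec]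
  rw [hxy]
  -- final dot product identity
  simp only [dotProduct]
  rw [← Finset.sum_fiberwise Finset.univ blk (fun j => cN j * x j)]
  apply Finset.sum_congr rfl
  intro i _
  have : ∑ j ∈ Finset.univ.filter (fun j => blk j = i), cN j * x j
      = cn i * ∑ j ∈ Finset.univ.filter (fun j => blk j = i), x j := by
    rw [Finset.mul_sum]
    apply Finset.sum_congr rfl
    intro j hj
    rw [hcN, (Finset.mem_filter.mp hj).2]
  rw [this, hs i]
end

section
/- Under the same replication structure, the predictive variances agree: c(x,x) − c_N(x)ᵀ(C_N + Λ_N)⁻¹ c_N(x) = c(x,x) − c_n(x)ᵀ(C_n + Λ_n A_n⁻¹)⁻¹ c_n(x). -/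
/-!
Let `P = (1 : Matrix (Fin n) (Fin n) ℝ).submatrix blk id` be the incidence matrix of the
replication, `P j i = 1` iff observation `j` is taken at design `i`. Then `C_N = P C_n Pᵀ`,
`Λ_N P = P Λ_n`, `c_N = P c_n` and `Pᵀ P = A_n`, so
`(C_N + Λ_N) P = P (C_n + Λ_n A_n⁻¹) A_n`. Cancelling `A_n` shows that `Pᵀ (C_N + Λ_N)⁻¹ P` is a
left inverse of `C_n + Λ_n A_n⁻¹`, and the two quadratic forms in `c_N = P c_n` and `c_n` agree.
-/

open Matrix Finset

namespace Matrix

variable {ι κ R : Type*}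

theorem inv_eq_transpose_mul_inv_mul_of_mul_eq [Fintype ι] [DecidableEq ι] [Fintype κ]
    [DecidableEq κ] [CommRing R] {K : Matrix ι ι R} {P : Matrix ι κ R} {M : Matrix κ κ R}
    (hK : IsUnit K.det) (hP : IsUnit (Pᵀ * P).det) (h : K * P = P * M * (Pᵀ * P)) :
    M⁻¹ = Pᵀ * K⁻¹ * P := by
  have hP' : P = K⁻¹ * P * M * (Pᵀ * P) := by
    rw [Matrix.mul_assoc K⁻¹, Matrix.mul_assoc K⁻¹, ← h, ← Matrix.mul_assoc,
      nonsing_inv_mul _ hK, Matrix.one_mul]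
  refine inv_eq_left_inv ?_
  calc Pᵀ * K⁻¹ * P * M = Pᵀ * (K⁻¹ * P * M * (Pᵀ * P)) * (Pᵀ * P)⁻¹ := by
        simp only [Matrix.mul_assoc, mul_nonsing_inv _ hP, Matrix.mul_one]
    _ = 1 := by rw [← hP', mul_nonsing_inv _ hP]

theorem dotProduct_mulVec_inv_of_mul_eq [Fintype ι] [DecidableEq ι] [Fintype κ]
    [DecidableEq κ] [CommRing R] {K : Matrix ι ι R} {P : Matrix ι κ R} {M : Matrix κ κ R}
    (hK : IsUnit K.det) (hP : IsUnit (Pᵀ * P).det) (h : K * P = P * M * (Pᵀ * P))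
    (c : κ → R) : (P *ᵥ c) ⬝ᵥ K⁻¹ *ᵥ (P *ᵥ c) = c ⬝ᵥ M⁻¹ *ᵥ c := by
  rw [inv_eq_transpose_mul_inv_mul_of_mul_eq hK hP h, ← mulVec_mulVec, ← mulVec_mulVec,
    dotProduct_mulVec c, vecMul_transpose]

section OneSubmatrix

variable [DecidableEq κ] (blk : ι → κ)

theorem one_submatrix_mulVec [Fintype κ] [CommSemiring R] (v : κ → R) :
    (1 : Matrix κ κ R).submatrix blk id *ᵥ v = v ∘ blk := by
  ext j
  simp [mulVec, dotProduct, one_apply]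

theorem one_submatrix_mul_mul_transpose [Fintype κ] [CommSemiring R] (M : Matrix κ κ R) :
    (1 : Matrix κ κ R).submatrix blk id * M * ((1 : Matrix κ κ R).submatrix blk id)ᵀ =
      M.submatrix blk blk := by
  ext j k
  simp [mul_apply, one_apply]

theorem diagonal_comp_mul_one_submatrix [Fintype ι] [DecidableEq ι] [Fintype κ]
    [CommSemiring R] (d : κ → R) :
    diagonal (fun j => d (blk j)) * (1 : Matrix κ κ R).submatrix blk id =
      (1 : Matrix κ κ R).submatrix blk id * diagonal d := by
  ext j i
  by_cases h : blk j = i <;> simp [one_apply, h]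

theorem transpose_one_submatrix_mul_one_submatrix [Fintype ι] [CommSemiring R] :
    ((1 : Matrix κ κ R).submatrix blk id)ᵀ * (1 : Matrix κ κ R).submatrix blk id =
      diagonal fun i => (#{j | blk j = i} : R) := by
  ext i k
  by_cases hik : i = k
  · subst hik
    simp [mul_apply, one_apply, eq_comm, ← ite_and]
  · simp only [transpose_apply, submatrix_apply, mul_apply, one_apply, id, diagonal_apply_ne _ hik,
      ← ite_and, mul_ite, mul_one, mul_zero]
    exact sum_eq_zero fun j _ => if_neg fun h => hik (h.2.symm.trans h.1)

theorem isUnit_det_transpose_one_submatrix_mul_one_submatrix [Fintype ι] [Fintype κ] [Field R]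
    [CharZero R] {blk : ι → κ} (hblk : Function.Surjective blk) :
    IsUnit (((1 : Matrix κ κ R).submatrix blk id)ᵀ * (1 : Matrix κ κ R).submatrix blk id).det := by
  rw [transpose_one_submatrix_mul_one_submatrix, det_diagonal, isUnit_iff_ne_zero,
    prod_ne_zero_iff]
  intro i _
  obtain ⟨j, rfl⟩ := hblk i
  exact Nat.cast_ne_zero.mpr (card_ne_zero.mpr ⟨j, by simp⟩)

end OneSubmatrix

end Matrix

theorem kriging_variance_replication_equivalence_general {N n : ℕ}
    (blk : Fin N → Fin n) (hsurj : Function.Surjective blk)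
    (Cn : Matrix (Fin n) (Fin n) ℝ) (r : Fin n → ℝ) (σ2 cxx : ℝ)
    (cn : Fin n → ℝ)
    (CN : Matrix (Fin N) (Fin N) ℝ) (hCN : ∀ j k, CN j k = Cn (blk j) (blk k))
    (ΛN : Matrix (Fin N) (Fin N) ℝ)
    (hΛN : ΛN = Matrix.diagonal fun j => r (blk j) / σ2)
    (cN : Fin N → ℝ) (hcN : ∀ j, cN j = cn (blk j))
    (a : Fin n → ℕ) (ha : ∀ i, a i = (Finset.univ.filter fun j => blk j = i).card)
    (An Λn : Matrix (Fin n) (Fin n) ℝ)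
    (hAn : An = Matrix.diagonal fun i => (a i : ℝ))
    (hΛn : Λn = Matrix.diagonal fun i => r i / σ2)
    (hinv : IsUnit (CN + ΛN).det) :
    cxx - cN ⬝ᵥ (CN + ΛN)⁻¹ *ᵥ cN = cxx - cn ⬝ᵥ (Cn + Λn * An⁻¹)⁻¹ *ᵥ cn := by
  set P : Matrix (Fin N) (Fin n) ℝ := (1 : Matrix (Fin n) (Fin n) ℝ).submatrix blk id
  have hP : IsUnit (Pᵀ * P).det := isUnit_det_transpose_one_submatrix_mul_one_submatrix hsurj
  have hPtP : Pᵀ * P = An := by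
    simp only [P, transpose_one_submatrix_mul_one_submatrix, hAn, ha]
  have hCN' : CN = P * Cn * Pᵀ := by
    rw [one_submatrix_mul_mul_transpose]
    exact Matrix.ext hCN
  have hΛN' : ΛN * P = P * Λn := by
    rw [hΛN, hΛn]
    exact diagonal_comp_mul_one_submatrix blk fun i => r i / σ2
  have hcN' : cN = P *ᵥ cn := by
    rw [one_submatrix_mulVec]
    exact funext hcN
  have hK : (CN + ΛN) * P = P * (Cn + Λn * An⁻¹) * (Pᵀ * P) := calc
    (CN + ΛN) * P = P * Cn * (Pᵀ * P) + P * Λn := by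
      rw [Matrix.add_mul, hCN', hΛN', Matrix.mul_assoc (P * Cn)]
    _ = P * (Cn + Λn * An⁻¹) * (Pᵀ * P) := by
      rw [hPtP, Matrix.mul_add, Matrix.add_mul, Matrix.mul_assoc P (Λn * An⁻¹),
        Matrix.mul_assoc Λn, nonsing_inv_mul _ (hPtP ▸ hP), Matrix.mul_one]
  rw [hcN', dotProduct_mulVec_inv_of_mul_eq hinv hP hK]

/-- Under replication, the kriging predictive variances computed from the full
data and from the averaged data (with effective noise Λₙ Aₙ⁻¹) agree. -/
theorem kriging_variance_replication_equivalence {N n : ℕ}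
    (blk : Fin N → Fin n) (hsurj : Function.Surjective blk)
    (Cn : Matrix (Fin n) (Fin n) ℝ) (r : Fin n → ℝ) (σ2 cxx : ℝ)
    (hr : ∀ i, 0 < r i) (hσ : 0 < σ2)
    (cn : Fin n → ℝ)
    (CN : Matrix (Fin N) (Fin N) ℝ) (hCN : ∀ j k, CN j k = Cn (blk j) (blk k))
    (ΛN : Matrix (Fin N) (Fin N) ℝ)
    (hΛN : ΛN = Matrix.diagonal fun j => r (blk j) / σ2)
    (cN : Fin N → ℝ) (hcN : ∀ j, cN j = cn (blk j))
    (a : Fin n → ℕ) (ha : ∀ i, a i = (Finset.univ.filter fun j => blk j = i).card)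
    (An Λn : Matrix (Fin n) (Fin n) ℝ)
    (hAn : An = Matrix.diagonal fun i => (a i : ℝ))
    (hΛn : Λn = Matrix.diagonal fun i => r i / σ2)
    (hinv : IsUnit (CN + ΛN).det) (hPD : (Cn + Λn * An⁻¹).PosDef) :
    cxx - cN ⬝ᵥ (CN + ΛN)⁻¹ *ᵥ cN = cxx - cn ⬝ᵥ (Cn + Λn * An⁻¹)⁻¹ *ᵥ cn :=
  kriging_variance_replication_equivalence_general blk hsurj Cn r σ2 cxx cn CN hCN ΛN hΛN cN hcN a
    ha An Λn hAn hΛn hinv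
end

section
/- The expected improvement α(m, s) = (T − m)Φ((T − m)/s) + s φ((T − m)/s), as a function of predictive mean m ∈ ℝ and standard deviation s > 0, is monotonically increasing in s and monotonically decreasing in m. -/
open MeasureTheory

/-- Standard normal density. -/
noncomputable def stdNormalPDF (z : ℝ) : ℝ :=
  (Real.sqrt (2 * Real.pi))⁻¹ * Real.exp (-z ^ 2 / 2)

/-- Standard normal CDF. -/
noncomputable def stdNormalCDF (z : ℝ) : ℝ :=
  ∫ t in Set.Iic z, stdNormalPDF t

/-- Expected improvement as a function of predictive mean and standard
deviation. -/
noncomputable def EI (T m s : ℝ) : ℝ :=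
  (T - m) * stdNormalCDF ((T - m) / s) + s * stdNormalPDF ((T - m) / s)

/-!
For `s ≠ 0` the expected improvement is the perspective `s * ψ ((T - m) / s)` of
`ψ z = z Φ(z) + φ(z)` (`stdEI`). Since `φ' z = -z φ z`, we get `ψ' = Φ`, and a perspective
`s * ψ (c / s)` has derivative `ψ' (c / s)` in `c` and `ψ z - z ψ' z` at `z = c / s` in `s`,
which here is `φ z`. Positivity of `φ` and `Φ` then gives strict monotonicity.
-/

lemma hasDerivAt_integral_Iic {f : ℝ → ℝ} (hf : Integrable f) (hfc : Continuous f) (z : ℝ) :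
    HasDerivAt (fun x => ∫ t in Set.Iic x, f t) (f z) z := by
  have split : (fun x => ∫ t in Set.Iic x, f t) =
      fun x => (∫ t in Set.Iic 0, f t) + ∫ t in (0 : ℝ)..x, f t := by
    ext x
    rw [← intervalIntegral.integral_Iic_sub_Iic hf.integrableOn hf.integrableOn]
    ring
  rw [split]
  exact (intervalIntegral.integral_hasDerivAt_right hf.intervalIntegrable
    hfc.stronglyMeasurable.stronglyMeasurableAtFilter hfc.continuousAt).const_add _

section Perspective

variable {f : ℝ → ℝ} {f' c s : ℝ}

lemma hasDerivAt_perspective_num (hs : s ≠ 0) (hf : HasDerivAt f f' (c / s)) :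
    HasDerivAt (fun c => s * f (c / s)) f' c :=
  ((hf.comp c ((hasDerivAt_id c).div_const s)).const_mul s).congr_deriv (by field_simp)

lemma hasDerivAt_perspective_scale (hs : s ≠ 0) (hf : HasDerivAt f f' (c / s)) :
    HasDerivAt (fun s => s * f (c / s)) (f (c / s) - c / s * f') s := by
  have hdiv : HasDerivAt (fun s => c / s) (-c / s ^ 2) s :=
    ((hasDerivAt_inv hs).const_mul c).congr_deriv (by ring)
  refine ((hasDerivAt_id' s).mul (hf.comp s hdiv)).congr_deriv ?_
  simp only [Function.comp]
  field_simp
  ring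

end Perspective

lemma stdNormalPDF_eq_gaussianPDFReal : stdNormalPDF = ProbabilityTheory.gaussianPDFReal 0 1 := by
  ext z
  simp [stdNormalPDF, ProbabilityTheory.gaussianPDFReal]

lemma stdNormalPDF_pos (z : ℝ) : 0 < stdNormalPDF z := by
  rw [stdNormalPDF_eq_gaussianPDFReal]
  exact ProbabilityTheory.gaussianPDFReal_pos 0 1 z one_ne_zero

lemma integrable_stdNormalPDF : Integrable stdNormalPDF :=
  stdNormalPDF_eq_gaussianPDFReal ▸ ProbabilityTheory.integrable_gaussianPDFReal 0 1

lemma continuous_stdNormalPDF : Continuous stdNormalPDF := by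
  unfold stdNormalPDF
  fun_prop

lemma hasDerivAt_stdNormalPDF (z : ℝ) : HasDerivAt stdNormalPDF (-z * stdNormalPDF z) z := by
  have hexponent : HasDerivAt (fun x : ℝ => -x ^ 2 / 2) (-z) z :=
    ((hasDerivAt_pow 2 z).neg.div_const 2).congr_deriv (by ring)
  exact (hexponent.exp.const_mul _).congr_deriv (by rw [stdNormalPDF]; ring)

lemma hasDerivAt_stdNormalCDF (z : ℝ) : HasDerivAt stdNormalCDF (stdNormalPDF z) z :=
  hasDerivAt_integral_Iic integrable_stdNormalPDF continuous_stdNormalPDF z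

lemma stdNormalCDF_pos (z : ℝ) : 0 < stdNormalCDF z := by
  rw [stdNormalCDF, setIntegral_pos_iff_support_of_nonneg_ae
    (Filter.Eventually.of_forall fun t => (stdNormalPDF_pos t).le)
    integrable_stdNormalPDF.integrableOn, Function.support_eq_univ (stdNormalPDF_pos · |>.ne'),
    Set.univ_inter]
  simp [Real.volume_Iic]

noncomputable def stdEI (z : ℝ) : ℝ :=
  z * stdNormalCDF z + stdNormalPDF z

lemma hasDerivAt_stdEI (z : ℝ) : HasDerivAt stdEI (stdNormalCDF z) z :=
  (((hasDerivAt_id' z).mul (hasDerivAt_stdNormalCDF z)).add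
    (hasDerivAt_stdNormalPDF z)).congr_deriv (by ring)

lemma EI_eq_mul_stdEI (T m : ℝ) {s : ℝ} (hs : s ≠ 0) :
    EI T m s = s * stdEI ((T - m) / s) := by
  rw [EI, stdEI]
  field_simp

lemma hasDerivAt_EI_sd (T m : ℝ) {s : ℝ} (hs : 0 < s) :
    HasDerivAt (fun s' => EI T m s') (stdNormalPDF ((T - m) / s)) s := by
  have hpersp := hasDerivAt_perspective_scale hs.ne' (hasDerivAt_stdEI ((T - m) / s))
  refine (hpersp.congr_deriv (by rw [stdEI]; ring)).congr_of_eventuallyEq ?_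
  filter_upwards [lt_mem_nhds hs] with s' hs' using EI_eq_mul_stdEI T m hs'.ne'

lemma hasDerivAt_EI_mean (T s : ℝ) {m : ℝ} (hs : s ≠ 0) :
    HasDerivAt (fun m' => EI T m' s) (-stdNormalCDF ((T - m) / s)) m := by
  have hpersp := hasDerivAt_perspective_num hs (hasDerivAt_stdEI ((T - m) / s))
  rw [funext fun m' => EI_eq_mul_stdEI T m' hs]
  exact (hpersp.comp m ((hasDerivAt_id' m).const_sub T)).congr_deriv (by ring)

/-- The expected improvement is strictly increasing in the predictive standard
deviation s > 0 (with ∂α/∂s = φ((T−m)/s) > 0) and strictly decreasing in the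
predictive mean m (with ∂α/∂m = −Φ((T−m)/s) < 0). -/
theorem EI_monotone (T : ℝ) :
    (∀ m : ℝ, ∀ s : ℝ, 0 < s →
      HasDerivAt (fun s' => EI T m s') (stdNormalPDF ((T - m) / s)) s ∧
        0 < stdNormalPDF ((T - m) / s)) ∧
    (∀ m : ℝ, ∀ s : ℝ, 0 < s →
      HasDerivAt (fun m' => EI T m' s) (-(stdNormalCDF ((T - m) / s))) m ∧
        stdNormalCDF ((T - m) / s) > 0) ∧
    (∀ m : ℝ, StrictMonoOn (fun s => EI T m s) (Set.Ioi (0 : ℝ))) ∧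
    (∀ s : ℝ, 0 < s → StrictAnti (fun m => EI T m s)) := by
  refine ⟨fun m s hs => ⟨hasDerivAt_EI_sd T m hs, stdNormalPDF_pos _⟩,
    fun m s hs => ⟨hasDerivAt_EI_mean T s hs.ne', stdNormalCDF_pos _⟩,
    fun m => ?_, fun s hs => ?_⟩
  · refine strictMonoOn_of_hasDerivWithinAt_pos (convex_Ioi 0)
      (fun s hs => (hasDerivAt_EI_sd T m hs).continuousAt.continuousWithinAt)
      (fun s hs => ?_) fun s _ => stdNormalPDF_pos ((T - m) / s)
    rw [interior_Ioi] at hs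
    exact (hasDerivAt_EI_sd T m hs).hasDerivWithinAt
  · exact strictAnti_of_hasDerivAt_neg (fun m => hasDerivAt_EI_mean T s hs.ne')
      fun m => neg_lt_zero.mpr (stdNormalCDF_pos _)
end
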